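/- Let G be a finitely generated group and let L be a G-recursively enumerable set of patterns over a finite alphabet Σ. Then there exists a set C of pattern codings over Σ, recursively enumerable by a Turing machine with oracle WP(G), such that L = p(C), where p(C) is the set of patterns defined by the consistent pattern codings in C. -/

import Mathlib

open scoped Classical

noncomputable section

namespace SDG

/-! ### Relativized computability -/

/-- Partial recursive functions `ℕ →. ℕ` relative to an oracle `O`. -/
inductive NatPartrecIn (O : ℕ →. ℕ) : (ℕ →. ℕ) → Prop
  | oracle : NatPartrecIn O O
  | zero : NatPartrecIn O (pure 0)
  | succ : NatPartrecIn O Nat.succ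
  | left : NatPartrecIn O ↑fun n : ℕ => n.unpair.1
  | right : NatPartrecIn O ↑fun n : ℕ => n.unpair.2
  | pair {f g} : NatPartrecIn O f → NatPartrecIn O g →
      NatPartrecIn O fun n => Nat.pair <$> f n <*> g n
  | comp {f g} : NatPartrecIn O f → NatPartrecIn O g →
      NatPartrecIn O fun n => g n >>= f
  | prec {f g} : NatPartrecIn O f → NatPartrecIn O g →
      NatPartrecIn O (Nat.unpaired fun a n =>
        n.rec (f a) fun y IH => do let i ← IH; g (Nat.pair a (Nat.pair y i)))
  | rfind {f} : NatPartrecIn O f →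
      NatPartrecIn O fun a => Nat.rfind fun n => (fun m => m = 0) <$> f (Nat.pair a n)

/-- A partial function between `Primcodable` types is partial recursive in the oracle `O`. -/
def PartrecIn (O : ℕ →. ℕ) {α σ : Type} [Primcodable α] [Primcodable σ] (f : α →. σ) : Prop :=
  NatPartrecIn O fun n =>
    Part.bind (Part.ofOption (Encodable.decode (α := α) n)) fun a => (f a).map Encodable.encode

/-- A predicate is recursively enumerable in the oracle `O` if it is the domain of a partial
function recursive in `O`. -/
def RePredIn (O : ℕ →. ℕ) {α : Type} [Primcodable α] (p : α → Prop) : Prop :=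
  PartrecIn O fun a => Part.assert (p a) fun _ => Part.some ()

/-- The characteristic function (as an oracle `ℕ →. ℕ`) of a set `L` of elements of a
`Primcodable` type: on the code of an element of `L` it answers `1`, elsewhere `0`. -/
def charFun {α : Type} [Primcodable α] (L : Set α) : ℕ →. ℕ :=
  fun n => Part.some (if ∃ a ∈ L, Encodable.encode a = n then 1 else 0)

/-! ### Finitely generated groups, words and pattern codings -/

variable {G : Type} [Group G]

/-- The group element represented by a word over the generators `S`. -/
def wordEval {k : ℕ} (S : Fin k → G) (w : List (Fin k)) : G :=
  (w.map S).prod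

/-- `S : Fin k → G` is a finite symmetric generating family containing the identity. -/
def IsGenData {k : ℕ} (S : Fin k → G) : Prop :=
  (∃ i, S i = 1) ∧ (∀ i, ∃ j, S j = (S i)⁻¹) ∧ Subgroup.closure (Set.range S) = ⊤

/-- The word problem of `G` with respect to the generating family `S`. -/
def WP {k : ℕ} (S : Fin k → G) : Set (List (Fin k)) :=
  {w | wordEval S w = 1}

/-- A pattern coding over the alphabet `A`: a finite list of pairs (word, symbol). -/
abbrev PatternCoding (k : ℕ) (A : Type) : Type :=
  List (List (Fin k) × A)

/-- The subshift defined by a set `C` of pattern codings: configurations in which no translate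
of a coded pattern occurs. -/
def XC {k : ℕ} (S : Fin k → G) {A : Type} (C : Set (PatternCoding k A)) : Set (G → A) :=
  {x | ¬ ∃ (g : G) (c : PatternCoding k A), c ∈ C ∧ ∀ p ∈ c, x (g * wordEval S p.1) = p.2}

/-- A set is effectively closed if it is defined by a recursively enumerable set of
pattern codings. -/
def EffectivelyClosed {k : ℕ} (S : Fin k → G) {A : Type} [Primcodable A]
    (X : Set (G → A)) : Prop :=
  ∃ C : Set (PatternCoding k A), REPred (· ∈ C) ∧ X = XC S C

/-- A set is `G`-effectively closed if it is defined by a set of pattern codings which is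
recursively enumerable with oracle the word problem of `G`. -/
def GEffectivelyClosed {k : ℕ} (S : Fin k → G) {A : Type} [Primcodable A]
    (X : Set (G → A)) : Prop :=
  ∃ C : Set (PatternCoding k A), RePredIn (charFun (WP S)) (· ∈ C) ∧ X = XC S C

/-- A pattern coding is consistent if words representing the same group element receive the
same symbol. -/
def Consistent {k : ℕ} (S : Fin k → G) {A : Type} (c : PatternCoding k A) : Prop :=
  ∀ p ∈ c, ∀ q ∈ c, wordEval S p.1 = wordEval S q.1 → p.2 = q.2

/-! ### Subshifts, SFTs, sofic subshifts -/

/-- `X ⊆ A^G` is a subshift: closed (for the product of the discrete topology) and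
shift-invariant. -/
def IsSubshift {A : Type} (X : Set (G → A)) : Prop :=
  (letI : TopologicalSpace A := ⊥; IsClosed X) ∧
    ∀ x ∈ X, ∀ g : G, (fun h => x (g⁻¹ * h)) ∈ X

/-- A pattern with finite support over the alphabet `A`. -/
structure Pattern (G : Type) (A : Type) where
  supp : Finset G
  val : (g : G) → g ∈ supp → A

/-- The pattern `p` occurs in the configuration `x` at position `g`. -/
def PatternOccurs {A : Type} (p : Pattern G A) (x : G → A) (g : G) : Prop :=
  ∀ (h : G) (hh : h ∈ p.supp), x (g * h) = p.val h hh

/-- The subshift defined by a set of forbidden patterns. -/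
def XPat {A : Type} (Fs : Set (Pattern G A)) : Set (G → A) :=
  {x | ¬ ∃ (g : G) (p : Pattern G A), p ∈ Fs ∧ PatternOccurs p x g}

/-- A subshift of finite type: defined by a finite set of forbidden patterns. -/
def IsSFT {A : Type} (X : Set (G → A)) : Prop :=
  ∃ Fs : Set (Pattern G A), Fs.Finite ∧ X = XPat Fs

/-- A witness that `X` is sofic: an SFT `Y` over a finite alphabet `B` together with a factor
code (continuous shift-equivariant surjection) from `Y` onto `X`. -/
structure SoficVia (G : Type) [Group G] {A : Type} (X : Set (G → A)) : Type 1 where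
  B : Type
  finB : Fintype B
  Y : Set (G → B)
  sft : IsSFT Y
  subY : IsSubshift Y
  phi : (G → B) → (G → A)
  cont : letI : TopologicalSpace B := ⊥
         letI : TopologicalSpace A := ⊥
         ContinuousOn phi Y
  equiv : ∀ y ∈ Y, ∀ g : G, phi (fun h => y (g⁻¹ * h)) = fun h => phi y (g⁻¹ * h)
  image : phi '' Y = X

/-- A subshift is sofic if it is the image of an SFT under a factor code. -/
def IsSofic {A : Type} (X : Set (G → A)) : Prop :=
  Nonempty (SoficVia G X)

/-- A factor code from `X` onto `Y`: continuous (discrete product topologies),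
shift-equivariant and surjective. -/
def FactorCode {A B : Type} (X : Set (G → A)) (Y : Set (G → B))
    (φ : (G → A) → (G → B)) : Prop :=
  (letI : TopologicalSpace A := ⊥
   letI : TopologicalSpace B := ⊥
   ContinuousOn φ X) ∧
  (∀ x ∈ X, ∀ g : G, φ (fun h => x (g⁻¹ * h)) = fun h => φ x (g⁻¹ * h)) ∧
  φ '' X = Y

/-- Two subshifts are conjugate if there is a shift-equivariant homeomorphism between them. -/
def Conjugate {A B : Type} (X : Set (G → A)) (Y : Set (G → B)) : Prop :=
  ∃ (φ : (G → A) → (G → B)) (ψ : (G → B) → (G → A)),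
    FactorCode X Y φ ∧ FactorCode Y X ψ ∧
    (∀ x ∈ X, ψ (φ x) = x) ∧ (∀ y ∈ Y, φ (ψ y) = y)

/-- The one-or-less subshift: configurations with at most one occurrence of the symbol `1`
(represented by `true`). -/
def Xle1 (G : Type) : Set (G → Bool) :=
  {x | ∀ g h : G, x g = true → x h = true → g = h}

/-! ### `G`-machines -/

/-- A `G`-machine: finite set of states, finite tape alphabet `A` with a blank symbol, initial
state, accepting states, and a transition function moving with the generators `Fin k`. -/
structure GMachine (k : ℕ) (A : Type) : Type 1 where
  Q : Type
  finQ : Fintype Q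
  blank : A
  q0 : Q
  QF : Set Q
  delta : A × Q → A × Q × Fin k

/-- One step of a `G`-machine in the fixed head model: if `δ(x(1),q) = (a,q',s)` then the new
configuration is `σ_{s⁻¹} x̃` where `x̃` is `x` with the value at `1` replaced by `a`. -/
def GMachine.step {k : ℕ} {A : Type} (M : GMachine k A) (S : Fin k → G) :
    (G → A) × M.Q → (G → A) × M.Q :=
  fun xq =>
    let t := M.delta (xq.1 1, xq.2)
    let xt : G → A := Function.update xq.1 1 t.1
    (fun h => xt (S t.2.2 * h), t.2.1)

/-- The configuration which equals the pattern `p` on its support and `blank` elsewhere. -/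
def Pattern.config {A : Type} (p : Pattern G A) (blank : A) : G → A :=
  fun g => if h : g ∈ p.supp then p.val g h else blank

/-- The `G`-machine `M` accepts the pattern `p` if starting from the configuration `x^p` in the
initial state it eventually reaches an accepting state. -/
def GMachine.Accepts {k : ℕ} {A : Type} (M : GMachine k A) (S : Fin k → G)
    (p : Pattern G A) : Prop :=
  ∃ n : ℕ, ((M.step S)^[n] (p.config M.blank, M.q0)).2 ∈ M.QF

/-- A set of patterns is `G`-recursively enumerable if some `G`-machine accepts exactly its
elements. -/
def GRecEnum {k : ℕ} (S : Fin k → G) {A : Type} (L : Set (Pattern G A)) : Prop :=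
  ∃ M : GMachine k A, ∀ p : Pattern G A, M.Accepts S p ↔ p ∈ L

/-- The consistent pattern coding `c` defines the pattern `p`. -/
def Defines {k : ℕ} (S : Fin k → G) {A : Type} (c : PatternCoding k A)
    (p : Pattern G A) : Prop :=
  (∀ g : G, g ∈ p.supp ↔ ∃ q ∈ c, wordEval S q.1 = g) ∧
  ∀ q ∈ c, ∀ hg : wordEval S q.1 ∈ p.supp, p.val (wordEval S q.1) hg = q.2

/-- `p(C)`: the set of patterns defined by the consistent pattern codings of `C`. -/
def patternsOf {k : ℕ} (S : Fin k → G) {A : Type} (C : Set (PatternCoding k A)) :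
    Set (Pattern G A) :=
  {p | ∃ c ∈ C, Consistent S c ∧ Defines S c p}

/-- A set of patterns is closed by extensions if any pattern extending a pattern of the set
also belongs to the set. -/
def ClosedByExtensions {A : Type} (L : Set (Pattern G A)) : Prop :=
  ∀ (p₁ p₂ : Pattern G A) (hsub : p₁.supp ⊆ p₂.supp),
    (∀ (g : G) (hg : g ∈ p₁.supp), p₂.val g (hsub hg) = p₁.val g hg) →
    p₁ ∈ L → p₂ ∈ L

/-! ### Balls, ends, amenability -/

/-- The ball of radius `n` in the word metric given by `S`. -/
def ballS {k : ℕ} (S : Fin k → G) (n : ℕ) : Set G :=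
  {x | ∃ w : List (Fin k), w.length ≤ n ∧ wordEval S w = x}

/-- Adjacency in the Cayley graph restricted to the set `V`. -/
def Adj {k : ℕ} (S : Fin k → G) (V : Set G) (a b : G) : Prop :=
  a ∈ V ∧ b ∈ V ∧ ∃ i, a * S i = b

/-- Reachability inside `V` in the Cayley graph of `(G,S)`. -/
def Reach {k : ℕ} (S : Fin k → G) (V : Set G) (a b : G) : Prop :=
  Relation.ReflTransGen (Adj S V) a b

/-- `G` has at least two ends: for some `n`, the complement of the ball of radius `n` in the
Cayley graph has at least two infinite connected components. -/
def HasTwoOrMoreEnds {k : ℕ} (S : Fin k → G) : Prop :=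
  ∃ (n : ℕ) (x y : G), x ∉ ballS S n ∧ y ∉ ballS S n ∧
    {z | Reach S (ballS S n)ᶜ x z}.Infinite ∧
    {z | Reach S (ballS S n)ᶜ y z}.Infinite ∧
    ¬ Reach S (ballS S n)ᶜ x y

/-- The Følner condition: `G` is amenable. -/
def FolnerAmenable (G : Type) [Group G] : Prop :=
  ∀ (K : Finset G) (ε : ℝ), 0 < ε →
    ∃ F : Finset G, F.Nonempty ∧ ∀ k ∈ K,
      ((F \ F.image (fun x => x * k)).card : ℝ) < ε * F.card

/-! ### `G × ℤ`, presentations, hardness and the domino problems -/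

/-- Generators of `G × ℤ`: the generators of `G` paired with `0`, together with `(1,±1)`. -/
def prodGens {k : ℕ} (S : Fin k → G) : Fin (k + 2) → G × Multiplicative ℤ :=
  fun i =>
    if h : (i : ℕ) < k then (S ⟨i, h⟩, 1)
    else if (i : ℕ) = k then (1, Multiplicative.ofAdd 1)
    else (1, Multiplicative.ofAdd (-1))

/-- The element of the free group over the generator indices represented by a word. -/
def freeWord {k : ℕ} (w : List (Fin k)) : FreeGroup (Fin k) :=
  (w.map FreeGroup.of).prod

/-- `G` is recursively presented with respect to `S`: there is a recursively enumerable set of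
relators (words over the generators) whose normal closure in the free group over the
generator indices is the kernel of the evaluation map. -/
def RecursivelyPresented {k : ℕ} (S : Fin k → G) : Prop :=
  ∃ R : Set (List (Fin k)), REPred (· ∈ R) ∧
    MonoidHom.ker (FreeGroup.lift S) = Subgroup.normalClosure (freeWord '' R)

/-- `L` is hard for the class of predicates recursively enumerable in the oracle `O`
(equivalently, hard for the halting problem of machines with oracle `O`): every
such predicate many-one reduces to `L` via a computable function. -/
def OracleREHard {α : Type} [Primcodable α] (O : ℕ →. ℕ) (L : Set α) : Prop :=
  ∀ p : ℕ → Prop, RePredIn O p → ∃ f : ℕ → α, Computable f ∧ ∀ n, p n ↔ f n ∈ L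

/-- The domino problem of `(K,T)`: pairs `(N, F)` of an alphabet size and a finite list of
pattern codings over `ℕ` such that no configuration with symbols `< N` avoids `F`. -/
def DP {K : Type} [Group K] {m : ℕ} (T : Fin m → K) : Set (ℕ × List (PatternCoding m ℕ)) :=
  {q | ¬ ∃ x : K → ℕ, (∀ g, x g < q.1) ∧ x ∈ XC T {c | c ∈ q.2}}

/-- The origin constrained domino problem of `(K,T)`: triples `((N,a),F)` such that no
configuration with symbols `< N` and the symbol `a` at the origin avoids `F`. -/
def OCDP {K : Type} [Group K] {m : ℕ} (T : Fin m → K) :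
    Set ((ℕ × ℕ) × List (PatternCoding m ℕ)) :=
  {q | ¬ ∃ x : K → ℕ, (∀ g, x g < q.1.1) ∧ x 1 = q.1.2 ∧ x ∈ XC T {c | c ∈ q.2}}

/-!
A `G`-machine started on `x^p` is simulated by an ordinary program that stores its tape as the
list of writes `(word, symbol)` and its head position as a word. The only group-theoretic
question the simulation ever asks is whether two words `u, v` represent the same element, that
is whether `u⁻¹ v ∈ WP(G)`. With the oracle at hand, search for `n` and `m` such that running
`n` steps while answering queries from the first `m` oracle answers reaches an accepting state,
aborting on any query beyond the table. A run that does not abort is the true simulation, and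
every finite run needs only finitely many answers, so the pattern codings accepted this way are
exactly those defining patterns accepted by the machine.
-/

namespace NatPartrecIn

variable {O : ℕ →. ℕ}

theorem of_eq {f g : ℕ →. ℕ} (hf : NatPartrecIn O f) (H : ∀ n, f n = g n) :
    NatPartrecIn O g :=
  funext H ▸ hf

theorem of_partrec {f : ℕ →. ℕ} (hf : Nat.Partrec f) : NatPartrecIn O f := by
  induction hf with
  | zero => exact .zero
  | succ => exact .succ
  | left => exact .left
  | right => exact .right
  | pair _ _ ihf ihg => exact .pair ihf ihg
  | comp _ _ ihf ihg => exact .comp ihf ihg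
  | prec _ _ ihf ihg => exact .prec ihf ihg
  | rfind _ ih => exact .rfind ih

theorem of_primrec {f : ℕ → ℕ} (hf : Primrec f) : NatPartrecIn O f :=
  of_partrec (Partrec.nat_iff.1 hf.to_comp)

theorem comp_primrec {f : ℕ →. ℕ} (hf : NatPartrecIn O f) {g : ℕ → ℕ} (hg : Primrec g) :
    NatPartrecIn O fun n => f (g n) :=
  (hf.comp (of_primrec hg)).of_eq fun _ => Part.bind_some _ _

theorem primrec_comp {f : ℕ →. ℕ} (hf : NatPartrecIn O f) {g : ℕ → ℕ} (hg : Primrec g) :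
    NatPartrecIn O fun n => (f n).map g :=
  ((of_primrec hg).comp hf).of_eq fun _ => Part.bind_some_eq_map _ _

end NatPartrecIn

/-- The answers `ω (m - 1), …, ω 0`, latest first: the order in which primitive recursion
builds the table. -/
def oracleTable (ω : ℕ → ℕ) : ℕ → List ℕ
  | 0 => []
  | m + 1 => ω m :: oracleTable ω m

theorem reverse_oracleTable (ω : ℕ → ℕ) (m : ℕ) :
    (oracleTable ω m).reverse = (List.range m).map ω := by
  induction m with
  | zero => rfl
  | succ m ih => simp [oracleTable, ih, List.range_succ]

theorem getElem?_reverse_oracleTable (ω : ℕ → ℕ) (m q : ℕ) :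
    (oracleTable ω m).reverse[q]? = if q < m then some (ω q) else none := by
  rw [reverse_oracleTable, List.getElem?_map]
  by_cases h : q < m <;> simp [h]

section OracleTable

variable {ω : ℕ → ℕ}

theorem NatPartrecIn.encode_oracleTable :
    NatPartrecIn (fun i => Part.some (ω i))
      fun m => Part.some (Encodable.encode (oracleTable ω m)) := by
  set O : ℕ →. ℕ := fun i => Part.some (ω i)
  have hcons : NatPartrecIn O fun z =>
      Part.some (Nat.succ (Nat.pair (ω z.unpair.2.unpair.1) z.unpair.2.unpair.2)) := by
    refine (NatPartrecIn.succ.comp ((NatPartrecIn.oracle.comp_primrec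
      ((Primrec.fst.comp .unpair).comp (Primrec.snd.comp .unpair))).pair
      (NatPartrecIn.of_primrec ((Primrec.snd.comp .unpair).comp
        (Primrec.snd.comp .unpair))))).of_eq fun z => ?_
    simp only [Seq.seq, Part.map_eq_map, Part.map_some, PFun.coe_val, Part.bind_some, O]
    exact Part.bind_some _ _
  refine ((NatPartrecIn.prec .zero hcons).comp_primrec
    (Primrec₂.natPair.comp (Primrec.const 0) Primrec.id)).of_eq fun m => ?_
  induction m with
  | zero => rfl
  | succ m ih =>
    simp only [Nat.unpaired, Nat.unpair_pair, id] at ih ⊢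
    erw [ih]
    simp [oracleTable]

theorem NatPartrecIn.primrec_oracleTable {h : ℕ → List ℕ → ℕ} (hh : Primrec₂ h)
    {r : ℕ → ℕ} (hr : Primrec r) :
    NatPartrecIn (fun i => Part.some (ω i)) fun z => Part.some (h z (oracleTable ω (r z))) := by
  have hpair : NatPartrecIn (fun i => Part.some (ω i)) fun z =>
      Part.some (Nat.pair z (Encodable.encode (oracleTable ω (r z)))) :=
    ((NatPartrecIn.of_primrec .id).pair (encode_oracleTable.comp_primrec hr)).of_eq
      fun z => by simp [Seq.seq]
  have hdecode : Primrec fun w : ℕ =>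
      h w.unpair.1 ((Encodable.decode (α := List ℕ) w.unpair.2).getD []) :=
    hh.comp (Primrec.fst.comp .unpair)
      (Primrec.option_getD.comp (Primrec.decode.comp (Primrec.snd.comp .unpair)) (.const []))
  exact (hpair.primrec_comp hdecode).of_eq fun z => by simp

theorem rePredIn_of_exists_oracleTable {α : Type} [Primcodable α] {p : α → Prop}
    {f : α → ℕ → List ℕ → Bool}
    (hf : Primrec fun x : α × ℕ × List ℕ => f x.1 x.2.1 x.2.2)
    (hp : ∀ a, p a ↔ ∃ n m, f a n (oracleTable ω m) = true) :
    RePredIn (fun i => Part.some (ω i)) p := by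
  -- `test ⟪x, ⟪n, m⟫⟫ t = 0` iff `x` decodes to some `a` with `f a n t = true`
  let test : ℕ → List ℕ → ℕ := fun z t =>
    Option.casesOn (Encodable.decode (α := α) z.unpair.1) 1
      fun a => bif f a z.unpair.2.unpair.1 t then 0 else 1
  have htest : Primrec₂ test :=
    Primrec.option_casesOn (Primrec.decode.comp ((Primrec.fst.comp .unpair).comp .fst))
      (.const 1) (Primrec.cond (hf.comp (Primrec.snd.pair (((Primrec.fst.comp .unpair).comp
        ((Primrec.snd.comp .unpair).comp (Primrec.fst.comp .fst))).pair
          (Primrec.snd.comp .fst)))) (.const 0) (.const 1)).to₂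
  have hsearch := (NatPartrecIn.primrec_oracleTable (ω := ω) htest
    ((Primrec.snd.comp .unpair).comp (Primrec.snd.comp .unpair))).rfind
  refine (NatPartrecIn.zero.comp hsearch).of_eq fun x => ?_
  rcases hx : (Encodable.decode x : Option α) with _ | a
  · simp only [Part.coe_none, Part.bind_none]
    refine Part.eq_none_iff'.2 fun hdom => ?_
    obtain ⟨n, hn, -⟩ := Nat.rfind_dom.1 (Part.bind_dom.1 hdom).1
    simp [test, hx] at hn
  · simp only [Part.coe_some, Part.bind_some]
    refine Part.ext' ?_ fun _ _ => rfl
    simp only [Part.map_Dom, Part.assert, hp]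
    constructor
    · intro hdom
      obtain ⟨y, hy, -⟩ := Nat.rfind_dom.1 (Part.bind_dom.1 hdom).1
      exact ⟨⟨y.unpair.1, y.unpair.2, by
        simpa [test, hx, Bool.cond_eq_ite] using hy⟩, trivial⟩
    · rintro ⟨⟨n, m, h⟩, -⟩
      exact Part.bind_dom.2
        ⟨Nat.rfind_dom.2 ⟨Nat.pair n m, by simp [test, hx, h], fun _ => trivial⟩, trivial⟩

end OracleTable

section Words

variable {k : ℕ} (S : Fin k → G)

@[simp]
theorem wordEval_nil : wordEval S [] = 1 := rfl

@[simp]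
theorem wordEval_cons (i : Fin k) (w : List (Fin k)) :
    wordEval S (i :: w) = S i * wordEval S w := by
  simp [wordEval]

@[simp]
theorem wordEval_append (u v : List (Fin k)) :
    wordEval S (u ++ v) = wordEval S u * wordEval S v := by
  simp [wordEval]

def wordInv (ι : Fin k → Fin k) (w : List (Fin k)) : List (Fin k) :=
  (w.map ι).reverse

variable {S} {ι : Fin k → Fin k}

theorem wordEval_wordInv (hι : ∀ i, S (ι i) = (S i)⁻¹) (w : List (Fin k)) :
    wordEval S (wordInv ι w) = (wordEval S w)⁻¹ := by
  simp [wordEval, wordInv, List.prod_inv_reverse, Function.comp_def, hι]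

theorem exists_wordEval_eq (hι : ∀ i, S (ι i) = (S i)⁻¹)
    (hgen : Subgroup.closure (Set.range S) = ⊤) (g : G) : ∃ w, wordEval S w = g := by
  have hg : g ∈ Subgroup.closure (Set.range S) := hgen ▸ Subgroup.mem_top g
  induction hg using Subgroup.closure_induction with
  | mem _ hx =>
    obtain ⟨i, rfl⟩ := hx
    exact ⟨[i], by simp⟩
  | one => exact ⟨[], rfl⟩
  | mul _ _ _ _ hx hy =>
    obtain ⟨u, rfl⟩ := hx
    obtain ⟨v, rfl⟩ := hy
    exact ⟨u ++ v, wordEval_append S u v⟩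
  | inv _ _ hx =>
    obtain ⟨w, rfl⟩ := hx
    exact ⟨wordInv ι w, wordEval_wordInv hι w⟩

end Words

section Patterns

variable {k : ℕ} {S : Fin k → G} {A : Type}

theorem Defines.consistent {c : PatternCoding k A} {p : Pattern G A} (hd : Defines S c p) :
    Consistent S c := by
  intro q hq q' hq' heq
  have hmem : wordEval S q.1 ∈ p.supp := (hd.1 _).2 ⟨q, hq, rfl⟩
  rw [← hd.2 q hq hmem, ← hd.2 q' hq' (heq ▸ hmem)]
  simp_rw [heq]

theorem exists_defines (hwords : ∀ g : G, ∃ w, wordEval S w = g) (p : Pattern G A) :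
    ∃ c : PatternCoding k A, Defines S c p := by
  choose word hword using hwords
  refine ⟨p.supp.attach.toList.map fun g => (word g.1, p.val g.1 g.2), fun g => ?_, ?_⟩
  · simp [hword]
  · simp only [List.mem_map, Finset.mem_toList, Finset.mem_attach, true_and]
    rintro _ ⟨⟨g, hg⟩, rfl⟩
    simp [hword]

theorem patternsOf_eq_of_defines (hwords : ∀ g : G, ∃ w, wordEval S w = g)
    {C : Set (PatternCoding k A)} {L : Set (Pattern G A)}
    (hC : ∀ c p, Defines S c p → (c ∈ C ↔ p ∈ L)) : patternsOf S C = L := by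
  ext p
  constructor
  · rintro ⟨c, hcC, -, hd⟩
    exact (hC c p hd).1 hcC
  · intro hp
    obtain ⟨c, hd⟩ := exists_defines hwords p
    exact ⟨c, (hC c p hd).2 hp, hd.consistent, hd⟩

end Patterns

section Simulation

variable {k : ℕ} {A : Type}

instance (M : GMachine k A) : Fintype M.Q := M.finQ

instance (M : GMachine k A) : Primcodable M.Q :=
  Primcodable.ofEquiv _ (Fintype.equivFin M.Q)

abbrev SimState (M : GMachine k A) : Type :=
  PatternCoding k A × List (Fin k) × M.Q

/-- The tape is a list of writes `(word, symbol)`, latest first. `eq` is a possibly partial test of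
equality in `G` between words; reading aborts (`none`) when it meets an undecided query before
the latest write at the position of `h`. -/
def readAt (eq : List (Fin k) → List (Fin k) → Option Bool) (blank : A)
    (tape : PatternCoding k A) (h : List (Fin k)) : Option A :=
  tape.foldr (fun e r => (eq e.1 h).bind fun b => bif b then some e.2 else r) (some blank)

def simStep (M : GMachine k A) (eq : List (Fin k) → List (Fin k) → Option Bool)
    (s : SimState M) : Option (SimState M) :=
  (readAt eq M.blank s.1 s.2.1).map fun a =>
    let t := M.delta (a, s.2.2)
    ((s.2.1, t.1) :: s.1, s.2.1 ++ [t.2.2], t.2.1)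

def simRun (M : GMachine k A) (eq : List (Fin k) → List (Fin k) → Option Bool)
    (c : PatternCoding k A) (n : ℕ) : Option (SimState M) :=
  (fun o => o.bind (simStep M eq))^[n] (some (c, [], M.q0))

def simAccepting (M : GMachine k A) (o : Option (SimState M)) : Bool :=
  o.any fun s => decide (s.2.2 ∈ M.QF)

variable (M : GMachine k A) {eq eq' : List (Fin k) → List (Fin k) → Option Bool}

theorem simRun_succ (c : PatternCoding k A) (n : ℕ) :
    simRun M eq c (n + 1) = (simRun M eq c n).bind (simStep M eq) :=
  Function.iterate_succ_apply' _ _ _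

theorem readAt_of_refines (heq : ∀ u v b, eq u v = some b → eq' u v = some b) {blank : A}
    {tape : PatternCoding k A} {h : List (Fin k)} {a : A}
    (hread : readAt eq blank tape h = some a) : readAt eq' blank tape h = some a := by
  induction tape with
  | nil => exact hread
  | cons e tape ih =>
    simp only [readAt, List.foldr_cons] at hread ⊢
    obtain ⟨b, hb, hrest⟩ := Option.bind_eq_some_iff.1 hread
    rw [heq _ _ _ hb, Option.bind_some]
    cases b
    · exact ih hrest
    · exact hrest

theorem simRun_of_refines (heq : ∀ u v b, eq u v = some b → eq' u v = some b)
    {c : PatternCoding k A} {n : ℕ} {s : SimState M}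
    (hrun : simRun M eq c n = some s) : simRun M eq' c n = some s := by
  induction n generalizing s with
  | zero => exact hrun
  | succ n ih =>
    rw [simRun_succ] at hrun ⊢
    obtain ⟨s₀, hs₀, hstep⟩ := Option.bind_eq_some_iff.1 hrun
    obtain ⟨a, ha, rfl⟩ := Option.map_eq_some_iff.1 hstep
    simp [ih hs₀, simStep, readAt_of_refines heq ha]

theorem readAt_congr {blank : A} {tape : PatternCoding k A} {h : List (Fin k)}
    (heq : ∀ e ∈ tape, eq e.1 h = eq' e.1 h) :
    readAt eq blank tape h = readAt eq' blank tape h := by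
  induction tape with
  | nil => rfl
  | cons e tape ih =>
    simp only [readAt, List.foldr_cons] at ih ⊢
    rw [heq e List.mem_cons_self, ih fun e' he' => heq e' (List.mem_cons_of_mem e he')]

theorem simRun_eventually_eq {β : Type*} {l : Filter β}
    {eqs : β → List (Fin k) → List (Fin k) → Option Bool}
    (heqs : ∀ u v, ∀ᶠ i in l, eqs i u v = eq u v) (c : PatternCoding k A) (n : ℕ) :
    ∀ᶠ i in l, simRun M (eqs i) c n = simRun M eq c n := by
  induction n with
  | zero => exact Filter.Eventually.of_forall fun _ => rfl
  | succ n ih =>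
    simp only [simRun_succ]
    rcases hs : simRun M eq c n with _ | s
    · filter_upwards [ih] with i hi
      rw [hi, hs]
      rfl
    · have htape : ∀ᶠ i in l, ∀ e ∈ s.1, eqs i e.1 s.2.1 = eq e.1 s.2.1 :=
        (Filter.eventually_all_finite s.1.finite_toSet).2 fun e _ => heqs e.1 s.2.1
      filter_upwards [ih, htape] with i hi hitape
      rw [hi, hs, Option.bind_some, Option.bind_some, simStep, simStep, readAt_congr hitape]

end Simulation

section Tracking

variable {k : ℕ} (S : Fin k → G) {A : Type}

def wordEq (u v : List (Fin k)) : Option Bool :=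
  some (decide (wordEval S u = wordEval S v))

def tapeAt (blank : A) (tape : PatternCoding k A) (g : G) : A :=
  tape.foldr (fun e r => if wordEval S e.1 = g then e.2 else r) blank

theorem readAt_wordEq (blank : A) (tape : PatternCoding k A) (h : List (Fin k)) :
    readAt (wordEq S) blank tape h = some (tapeAt S blank tape (wordEval S h)) := by
  induction tape with
  | nil => rfl
  | cons e tape ih =>
    simp only [readAt, tapeAt, List.foldr_cons, wordEq, Option.bind_some] at ih ⊢
    rw [ih]
    by_cases he : wordEval S e.1 = wordEval S h <;> simp [he]

variable {S}

theorem tapeAt_eq {blank a : A} {tape : PatternCoding k A} {g : G}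
    (hmem : ∀ e ∈ tape, wordEval S e.1 = g → e.2 = a)
    (hnone : (∀ e ∈ tape, wordEval S e.1 ≠ g) → blank = a) : tapeAt S blank tape g = a := by
  induction tape with
  | nil => exact hnone (by simp)
  | cons e tape ih =>
    simp only [tapeAt, List.foldr_cons] at ih ⊢
    split_ifs with he
    · exact hmem e List.mem_cons_self he
    · refine ih (fun e' he' => hmem e' (List.mem_cons_of_mem _ he')) fun hne => hnone ?_
      simpa [he] using hne

theorem tapeAt_of_defines {c : PatternCoding k A} {p : Pattern G A} (hd : Defines S c p)
    (blank : A) (g : G) : tapeAt S blank c g = p.config blank g := by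
  by_cases hg : g ∈ p.supp
  · refine tapeAt_eq (fun e he heg => ?_) fun hne => ?_
    · subst heg
      simp [Pattern.config, hg, hd.2 e he hg]
    · obtain ⟨e, he, heg⟩ := (hd.1 g).1 hg
      exact absurd heg (hne e he)
  · refine tapeAt_eq (fun e he heg => absurd ((hd.1 g).2 ⟨e, he, heg⟩) hg) fun _ => ?_
    simp [Pattern.config, hg]

variable (S) (M : GMachine k A)

/-- The machine moves the configuration rather than its head, so its configuration is the
simulated tape seen from the head position. -/
def Tracks (s : SimState M) (xq : (G → A) × M.Q) : Prop :=
  s.2.2 = xq.2 ∧ ∀ g, xq.1 g = tapeAt S M.blank s.1 (wordEval S s.2.1 * g)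

variable {S M}

theorem tracks_init {c : PatternCoding k A} {p : Pattern G A} (hd : Defines S c p) :
    Tracks S M (c, [], M.q0) (p.config M.blank, M.q0) :=
  ⟨rfl, fun g => by simp [tapeAt_of_defines hd]⟩

theorem Tracks.exists_simStep {s : SimState M} {xq : (G → A) × M.Q} (h : Tracks S M s xq) :
    ∃ s', simStep M (wordEq S) s = some s' ∧ Tracks S M s' (M.step S xq) := by
  obtain ⟨hq, hx⟩ := h
  have hread : readAt (wordEq S) M.blank s.1 s.2.1 = some (xq.1 1) := by
    rw [readAt_wordEq, hx 1, mul_one]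
  set t := M.delta (xq.1 1, xq.2)
  refine ⟨((s.2.1, t.1) :: s.1, s.2.1 ++ [t.2.2], t.2.1), by simp [simStep, hread, hq, t],
    rfl, fun g => ?_⟩
  simp only [GMachine.step, tapeAt, List.foldr_cons, wordEval_append, wordEval_cons,
    wordEval_nil, mul_one]
  rw [Function.update_apply, mul_assoc, left_eq_mul]
  split_ifs
  · rfl
  · exact hx _

end Tracking

section Acceptance

variable {k : ℕ} {S : Fin k → G} {A : Type} {M : GMachine k A}

theorem exists_simRun_tracks {c : PatternCoding k A} {p : Pattern G A} (hd : Defines S c p)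
    (n : ℕ) : ∃ s, simRun M (wordEq S) c n = some s ∧
      Tracks S M s ((M.step S)^[n] (p.config M.blank, M.q0)) := by
  induction n with
  | zero => exact ⟨_, rfl, tracks_init hd⟩
  | succ n ih =>
    obtain ⟨s, hs, htracks⟩ := ih
    obtain ⟨s', hs', htracks'⟩ := htracks.exists_simStep
    refine ⟨s', by rw [simRun_succ, hs, Option.bind_some, hs'], ?_⟩
    rwa [Function.iterate_succ_apply']

def charVal {α : Type} [Primcodable α] (L : Set α) (n : ℕ) : ℕ :=
  if ∃ a ∈ L, Encodable.encode a = n then 1 else 0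

theorem charVal_encode {α : Type} [Primcodable α] (L : Set α) (a : α) :
    charVal L (Encodable.encode a) = if a ∈ L then 1 else 0 := by
  simp [charVal, Encodable.encode_inj]

variable (S)

/-- Decides `u = v` in `G` by the query `u⁻¹ v ∈ WP S`, answered from a table of oracle
answers; `none` when the query lies beyond the table. -/
def tableEq (ι : Fin k → Fin k) (t : List ℕ) (u v : List (Fin k)) : Option Bool :=
  (t.reverse[Encodable.encode (wordInv ι u ++ v)]?).map (· == 1)

theorem tableEq_oracleTable {ι : Fin k → Fin k} (hι : ∀ i, S (ι i) = (S i)⁻¹) (m : ℕ)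
    (u v : List (Fin k)) : tableEq ι (oracleTable (charVal (WP S)) m) u v =
      if Encodable.encode (wordInv ι u ++ v) < m then wordEq S u v else none := by
  rw [tableEq, getElem?_reverse_oracleTable]
  split_ifs
  · by_cases h : wordEval S u = wordEval S v <;>
      simp [charVal_encode, WP, wordEq, wordEval_wordInv hι, inv_mul_eq_one, h]
  · rfl

variable (M) in
def acceptedCodings (ι : Fin k → Fin k) : Set (PatternCoding k A) :=
  {c | ∃ n m, simAccepting M (simRun M (tableEq ι (oracleTable (charVal (WP S)) m)) c n) = true}

variable {S}

theorem mem_acceptedCodings_iff {ι : Fin k → Fin k} (hι : ∀ i, S (ι i) = (S i)⁻¹)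
    {c : PatternCoding k A} {p : Pattern G A} (hd : Defines S c p) :
    c ∈ acceptedCodings S M ι ↔ M.Accepts S p := by
  have hideal (n : ℕ) :
      simAccepting M (simRun M (wordEq S) c n) = true ↔
      ((M.step S)^[n] (p.config M.blank, M.q0)).2 ∈ M.QF := by
    obtain ⟨s, hs, hq, -⟩ := exists_simRun_tracks (M := M) hd n
    simp [simAccepting, hs, hq]
  simp only [acceptedCodings, Set.mem_ofPred_eq, GMachine.Accepts, ← hideal, simAccepting,
    Option.any_eq_true]
  constructor
  · rintro ⟨n, m, s, hs, hacc⟩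
    refine ⟨n, s, simRun_of_refines M (fun u v b hb => ?_) hs, hacc⟩
    rw [tableEq_oracleTable S hι] at hb
    split_ifs at hb
    exact hb
  · rintro ⟨n, hn⟩
    have hagree (u v : List (Fin k)) :
        ∀ᶠ m in Filter.atTop,
          tableEq ι (oracleTable (charVal (WP S)) m) u v = wordEq S u v := by
      filter_upwards [Filter.eventually_gt_atTop (Encodable.encode (wordInv ι u ++ v))] with m hm
      rw [tableEq_oracleTable S hι, if_pos hm]
    obtain ⟨m, hm⟩ := (simRun_eventually_eq M hagree c n).exists
    exact ⟨n, m, hm ▸ hn⟩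

end Acceptance

section Computability

open Primrec

variable {k : ℕ} {A : Type} [Primcodable A] {β : Type} [Primcodable β]
  {eq : β → List (Fin k) → List (Fin k) → Option Bool}

theorem primrec_readAt
    (heq : Primrec fun x : β × List (Fin k) × List (Fin k) => eq x.1 x.2.1 x.2.2) (blank : A) :
    Primrec fun x : β × PatternCoding k A × List (Fin k) =>
      readAt (eq x.1) blank x.2.1 x.2.2 := by
  have hquery : Primrec fun y : (β × PatternCoding k A × List (Fin k)) ×
      (List (Fin k) × A) × Option A => eq y.1.1 y.2.1.1 y.1.2.2 :=
    heq.comp ((fst.comp fst).pair ((fst.comp (fst.comp snd)).pair (snd.comp (snd.comp fst))))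
  have hcont : Primrec₂ fun (y : (β × PatternCoding k A × List (Fin k)) ×
      (List (Fin k) × A) × Option A) (b : Bool) => bif b then some y.2.1.2 else y.2.2 :=
    (cond snd (option_some.comp (snd.comp (fst.comp (snd.comp fst))))
      (snd.comp (snd.comp fst))).to₂
  exact list_foldr (fst.comp snd) (const (some blank)) (option_bind hquery hcont).to₂

theorem primrec_simAccepting (M : GMachine k A) : Primrec (simAccepting M) :=
  (option_casesOn .id (const false)
    ((dom_finite fun q : M.Q => decide (q ∈ M.QF)).comp (snd.comp (snd.comp snd))).to₂).of_eq
    fun o => by cases o <;> rfl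

variable [Finite A] (M : GMachine k A)

theorem primrec_simStep
    (heq : Primrec fun x : β × List (Fin k) × List (Fin k) => eq x.1 x.2.1 x.2.2) :
    Primrec fun x : β × SimState M => simStep M (eq x.1) x.2 := by
  have hread : Primrec fun x : β × SimState M => readAt (eq x.1) M.blank x.2.1 x.2.2.1 :=
    (primrec_readAt heq M.blank).comp (fst.pair ((fst.comp snd).pair (fst.comp (snd.comp snd))))
  have hhead : Primrec fun y : (β × SimState M) × A => y.1.2.2.1 :=
    fst.comp (snd.comp (snd.comp fst))
  have hdelta : Primrec fun y : (β × SimState M) × A => M.delta (y.2, y.1.2.2.2) :=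
    (dom_finite M.delta).comp (snd.pair (snd.comp (snd.comp (snd.comp fst))))
  have hnext : Primrec₂ fun (x : β × SimState M) (a : A) =>
      (((x.2.2.1, (M.delta (a, x.2.2.2)).1) :: x.2.1, x.2.2.1 ++ [(M.delta (a, x.2.2.2)).2.2],
        (M.delta (a, x.2.2.2)).2.1) : SimState M) :=
    ((list_cons.comp (hhead.pair (fst.comp hdelta)) (fst.comp (snd.comp fst))).pair
      ((list_concat.comp hhead (snd.comp (snd.comp hdelta))).pair
        (fst.comp (snd.comp hdelta)))).to₂
  exact option_map hread hnext

theorem primrec_simRun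
    (heq : Primrec fun x : β × List (Fin k) × List (Fin k) => eq x.1 x.2.1 x.2.2) :
    Primrec fun x : β × PatternCoding k A × ℕ => simRun M (eq x.1) x.2.1 x.2.2 := by
  have hstep : Primrec₂ fun (x : β × PatternCoding k A × ℕ) (o : Option (SimState M)) =>
      o.bind (simStep M (eq x.1)) :=
    (option_bind snd
      ((primrec_simStep M heq).comp ((fst.comp (fst.comp fst)).pair snd)).to₂).to₂
  exact nat_iterate (snd.comp snd) (option_some.comp ((fst.comp snd).pair (const ([], M.q0))))
    hstep

theorem primrec_tableEq (ι : Fin k → Fin k) :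
    Primrec fun x : List ℕ × List (Fin k) × List (Fin k) => tableEq ι x.1 x.2.1 x.2.2 :=
  option_map (list_getElem?.comp (list_reverse.comp fst) (Primrec.encode.comp
      (list_append.comp
        (list_reverse.comp (list_map (fst.comp snd) ((dom_finite ι).comp snd).to₂))
        (snd.comp snd))))
    (Primrec.beq.comp snd (const 1)).to₂

theorem rePredIn_acceptedCodings (S : Fin k → G) (ι : Fin k → Fin k) :
    RePredIn (charFun (WP S)) (· ∈ acceptedCodings S M ι) := by
  refine rePredIn_of_exists_oracleTable
    (f := fun c n t => simAccepting M (simRun M (tableEq ι t) c n)) ?_ fun _ => Iff.rfl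
  exact (primrec_simAccepting M).comp ((primrec_simRun M (primrec_tableEq ι)).comp
    ((snd.comp snd).pair (fst.pair (fst.comp snd))))

end Computability

/-- A `G`-recursively enumerable set of patterns is the set of patterns of a
set of pattern codings which is recursively enumerable with oracle the word problem. -/
theorem gRecEnum_to_oracle_codings
    {G : Type} [Group G] {k : ℕ} (S : Fin k → G) (hS : IsGenData S)
    {A : Type} [Fintype A] [Primcodable A]
    (L : Set (Pattern G A)) (hL : GRecEnum S L) :
    ∃ C : Set (PatternCoding k A),
      RePredIn (charFun (WP S)) (· ∈ C) ∧ patternsOf S C = L := by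
  obtain ⟨-, hsymm, hgen⟩ := hS
  choose ι hι using hsymm
  obtain ⟨M, hM⟩ := hL
  refine ⟨acceptedCodings S M ι, rePredIn_acceptedCodings M S ι, ?_⟩
  exact patternsOf_eq_of_defines (exists_wordEval_eq hι hgen)
    fun c p hd => (mem_acceptedCodings_iff hι hd).trans (hM p)

end SDG
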